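/- Let S be an additively reduced, additively Furstenberg semidomain with A₊(S) = S^×, and let G be a torsion-free abelian group. Then every binomial f = s_0 x^{g_0} + s_1 x^{g_1} ∈ S[G] (s_0, s_1 nonzero, g_0 ≠ g_1) with s_0 or s_1 a unit of S is irreducible. -/

import Mathlib

/-- Witness that `S` is a semidomain: an injective semiring hom into an integral domain. -/
structure SemidomainWitness (S : Type*) [CommSemiring S] where
  D : Type
  [commRing : CommRing D]
  [isDomain : IsDomain D]
  emb : S →+* D
  inj : Function.Injective emb

/-- `S` is a semidomain, i.e. (isomorphic to) a subsemiring of an integral domain. -/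
def IsSemidomain (S : Type*) [CommSemiring S] : Prop := Nonempty (SemidomainWitness S)

/-- `S` is additively reduced: `0` is the only additively invertible element. -/
def AddReduced (S : Type*) [AddZeroClass S] : Prop := ∀ a b : S, a + b = 0 → a = 0

/-- `s` is an atom of the additive monoid `(S, +)` (for `S` additively reduced):
it is nonzero and cannot be written as a sum of two nonzero elements. -/
def IsAddAtom {S : Type*} [AddZeroClass S] (s : S) : Prop :=
  s ≠ 0 ∧ ∀ a b : S, s = a + b → a = 0 ∨ b = 0

/-- `S` is additively Furstenberg: every nonzero element is divisible in `(S, +)`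
by an additive atom. -/
def AddFurstenberg (S : Type*) [AddZeroClass S] : Prop :=
  ∀ s : S, s ≠ 0 → ∃ a t : S, IsAddAtom a ∧ s = a + t


section GroupAlg
variable {S : Type*} [CommSemiring S] {G : Type*} [AddCommGroup G]

/-- A monomial `s·x^g` in the group semidomain `S[G]`. -/
def IsMonomial (f : AddMonoidAlgebra S G) : Prop :=
  ∃ (g : G) (s : S), f = AddMonoidAlgebra.single g s

/-- `f` is monolithic: every factorization of `f` in `S[G]` has a monomial factor. -/
def Monolithic (f : AddMonoidAlgebra S G) : Prop :=
  f ≠ 0 ∧ ∀ p q : AddMonoidAlgebra S G, f = p * q → IsMonomial p ∨ IsMonomial q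

end GroupAlg

/-!
Over an additively reduced semidomain no cancellation can occur in a product, so every sum
`a + b` of support points of `p` and `q` lies in the support of `p * q`. If `f = p * q`, these
sums all lie in `{g₀, g₁}`; were both supports of size at least two, say `a ≠ a'` and `b ≠ b'`,
we would get `a + b = a' + b'` and `a + b' = a' + b`, hence `2 • (a - a') = 0`, excluded by
torsion-freeness. So one factor is a monomial `c x^h`, and `c` divides a unit coefficient of `f`.
The same count shows that units of `S[G]` have at most one support point, so `f` is no unit.
-/

theorem AddReduced.subsingleton_addUnits {S : Type*} [AddMonoid S] (hred : AddReduced S) :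
    Subsingleton (AddUnits S) :=
  Subsingleton.addUnits_of_isAddUnit fun a ha ↦
    let ⟨b, hab⟩ := ha.exists_neg
    hred a b hab

theorem IsSemidomain.noZeroDivisors {S : Type*} [CommSemiring S] (hS : IsSemidomain S) :
    NoZeroDivisors S :=
  let ⟨W⟩ := hS
  letI := W.commRing
  have := W.isDomain
  W.inj.noZeroDivisors W.emb (map_zero _) (map_mul _)

theorem eq_of_add_eq_add_of_add_eq_add {G : Type*} [AddCommGroup G]
    (h2 : ∀ g : G, 2 • g = 0 → g = 0) {a a' b b' : G}
    (h : a + b = a' + b') (h' : a + b' = a' + b) : a = a' := by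
  have : 2 • (a - a') = (a + b - (a' + b')) + (a + b' - (a' + b)) := by abel
  rw [h, h', sub_self, sub_self, add_zero] at this
  exact sub_eq_zero.mp (h2 _ this)

theorem Set.subsingleton_or_subsingleton_of_add_mem_pair {G : Type*} [AddCommGroup G]
    (h2 : ∀ g : G, 2 • g = 0 → g = 0) {A B : Set G} {g₀ g₁ : G}
    (h : ∀ a ∈ A, ∀ b ∈ B, a + b = g₀ ∨ a + b = g₁) : A.Subsingleton ∨ B.Subsingleton := by
  by_contra! hAB
  obtain ⟨⟨a, ha, a', ha', haa'⟩, ⟨b, hb, b', hb', hbb'⟩⟩ := hAB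
  have eq_of_ne_of_ne : ∀ {u v w : G}, (u = g₀ ∨ u = g₁) → (v = g₀ ∨ v = g₁) → (w = g₀ ∨ w = g₁) →
      u ≠ w → v ≠ w → u = v := by
    rintro u v w (rfl | rfl) (rfl | rfl) (rfl | rfl) <;> simp
  have hab' : a + b' = a' + b :=
    eq_of_ne_of_ne (h a ha b' hb') (h a' ha' b hb) (h a ha b hb)
      (by simpa using hbb'.symm) (by simpa using haa'.symm)
  have hab : a + b = a' + b' :=
    eq_of_ne_of_ne (h a ha b hb) (h a' ha' b' hb') (h a ha b' hb')
      (by simpa using hbb') (by rw [hab']; simpa using hbb'.symm)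
  exact haa' (eq_of_add_eq_add_of_add_eq_add h2 hab hab')

namespace AddMonoidAlgebra

variable {S G : Type*}

theorem isUnit_single [Semiring S] [AddGroup G] {c : S} (hc : IsUnit c) (g : G) :
    IsUnit (single g c) := by
  obtain ⟨u, rfl⟩ := hc
  refine ⟨⟨single g u, single (-g) ↑u⁻¹, ?_, ?_⟩, rfl⟩ <;>
    simp [single_mul_single, one_def]

theorem add_mem_support_coeff_mul [Semiring S] [Subsingleton (AddUnits S)] [NoZeroDivisors S]
    [AddMonoid G] {p q : AddMonoidAlgebra S G} {a b : G}
    (ha : a ∈ p.coeff.support) (hb : b ∈ q.coeff.support) : a + b ∈ (p * q).coeff.support := by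
  classical
  rw [Finsupp.mem_support_iff] at ha hb ⊢
  intro hab
  rw [coeff_mul, Finsupp.sum, Finset.sum_eq_zero_iff] at hab
  have := Finset.sum_eq_zero_iff.mp (hab a (Finsupp.mem_support_iff.mpr ha)) b
    (Finsupp.mem_support_iff.mpr hb)
  exact mul_ne_zero ha hb (by simpa using this)

theorem support_coeff_subsingleton_of_isUnit [Semiring S] [Subsingleton (AddUnits S)]
    [NoZeroDivisors S] [AddRightCancelMonoid G] {p : AddMonoidAlgebra S G} (hp : IsUnit p) :
    (p.coeff.support : Set G).Subsingleton := by
  classical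
  obtain ⟨v, hpv⟩ := hp.exists_right_inv
  obtain hv | ⟨b, hb⟩ := v.coeff.support.eq_empty_or_nonempty
  · rw [Finsupp.support_eq_empty, coeff_eq_zero] at hv
    have : Subsingleton (AddMonoidAlgebra S G) :=
      subsingleton_of_zero_eq_one (by rw [← hpv, hv, mul_zero])
    simp [Subsingleton.elim p 0]
  · have add_eq_zero : ∀ a ∈ p.coeff.support, a + b = 0 := fun a ha ↦ by
      have := add_mem_support_coeff_mul ha hb
      rw [hpv, one_def, coeff_single] at this
      exact Finset.mem_singleton.mp (Finsupp.support_single_subset this)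
    intro a ha a' ha'
    exact add_right_cancel ((add_eq_zero a ha).trans (add_eq_zero a' ha').symm)

theorem isUnit_of_isUnit_coeff_mul [CommSemiring S] [AddGroup G] {p q : AddMonoidAlgebra S G}
    {x : G} (hx : IsUnit ((p * q).coeff x)) (hp : (p.coeff.support : Set G).Subsingleton) :
    IsUnit p := by
  obtain ⟨g, c, hpgc⟩ :=
    Finsupp.card_support_le_one'.mp (Finset.card_le_one_iff_subsingleton.mpr hp)
  obtain rfl : p = single g c := coeff_injective hpgc
  rw [coeff_single_mul_apply] at hx
  exact isUnit_single (isUnit_of_mul_isUnit_left hx) g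

end AddMonoidAlgebra

theorem binomial_irreducible_of_unit_coeff_general
    {S : Type*} [CommSemiring S] {G : Type*} [AddCommGroup G]
    (hS : IsSemidomain S) (hred : AddReduced S)
    (htf : ∀ (g : G) (n : ℕ), n ≠ 0 → n • g = 0 → g = 0)
    (s₀ s₁ : S) (g₀ g₁ : G) (hs₀ : s₀ ≠ 0) (hs₁ : s₁ ≠ 0) (hgg : g₀ ≠ g₁)
    (hu : IsUnit s₀ ∨ IsUnit s₁)
    (f : AddMonoidAlgebra S G)
    (hf : f = AddMonoidAlgebra.single g₀ s₀ + AddMonoidAlgebra.single g₁ s₁) :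
    Irreducible f := by
  classical
  have := hS.noZeroDivisors
  have := hred.subsingleton_addUnits
  have hsupp : f.coeff.support = {g₀, g₁} := by
    rw [hf]; exact Finsupp.support_single_add_single hgg hs₀ hs₁
  obtain ⟨x, hx⟩ : ∃ x, IsUnit (f.coeff x) := by
    rcases hu with hu | hu
    · exact ⟨g₀, by simpa [hf, hgg] using hu⟩
    · exact ⟨g₁, by simpa [hf, hgg.symm] using hu⟩
  refine ⟨fun hunit ↦ hgg ?_, fun p q hpq ↦ ?_⟩
  · exact AddMonoidAlgebra.support_coeff_subsingleton_of_isUnit hunit (by simp [hsupp])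
      (by simp [hsupp])
  · have hpair : ∀ a ∈ (p.coeff.support : Set G), ∀ b ∈ (q.coeff.support : Set G),
        a + b = g₀ ∨ a + b = g₁ := fun a ha b hb ↦ by
      simpa [← hpq, hsupp] using AddMonoidAlgebra.add_mem_support_coeff_mul ha hb
    rcases Set.subsingleton_or_subsingleton_of_add_mem_pair (fun g ↦ htf g 2 two_ne_zero) hpair
      with hp | hq
    · exact .inl (AddMonoidAlgebra.isUnit_of_isUnit_coeff_mul (hpq ▸ hx) hp)
    · exact .inr (AddMonoidAlgebra.isUnit_of_isUnit_coeff_mul (mul_comm p q ▸ hpq ▸ hx) hq)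

/-- For `S` additively reduced, additively Furstenberg with `A₊(S) = S^×` and `G`
torsion-free abelian: a binomial whose (nonzero) coefficients include a unit is irreducible. -/
theorem binomial_irreducible_of_unit_coeff
    {S : Type*} [CommSemiring S] {G : Type*} [AddCommGroup G]
    (hS : IsSemidomain S) (hred : AddReduced S) (hfur : AddFurstenberg S)
    (hatoms : ∀ a : S, IsAddAtom a ↔ IsUnit a)
    (htf : ∀ (g : G) (n : ℕ), n ≠ 0 → n • g = 0 → g = 0)
    (s₀ s₁ : S) (g₀ g₁ : G) (hs₀ : s₀ ≠ 0) (hs₁ : s₁ ≠ 0) (hgg : g₀ ≠ g₁)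
    (hu : IsUnit s₀ ∨ IsUnit s₁)
    (f : AddMonoidAlgebra S G)
    (hf : f = AddMonoidAlgebra.single g₀ s₀ + AddMonoidAlgebra.single g₁ s₁) :
    Irreducible f :=
  binomial_irreducible_of_unit_coeff_general hS hred htf s₀ s₁ g₀ g₁ hs₀ hs₁ hgg hu f hf
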